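/- arXiv:1304.2147 — 5 statements merged into one kernel-verified Lean document; each statement's English description precedes it below -/
import Mathlib

section
/- Let f, g : [0,1] → ℝ be continuous positive functions, and let w₁, w₂ be the fundamental solutions of (w'/f)' + g·w = 0 with w₁(0)=1, (w₁'/f)(0)=0, w₂(0)=0, (w₂'/f)(0)=1. Define eⱼ(x) = (1/f(x))·wⱼ'(x) − i·wⱼ(x) for j = 1,2. Then e₂(1) + i·e₁(1) ≠ 0, and the complex number t := 2/(e₂(1) + i·e₁(1)) satisfies 4/|t|² = ((w₂'/f)(1))² + ((w₁'/f)(1))² + (w₂(1))² + (w₁(1))² + 2. -/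
set_option autoImplicit false

open Complex

/-- the transmission coefficient is well defined and the formula for `4/|t|²`. -/
theorem stmt_2 (f g : ℝ → ℝ)
    (hf : ContinuousOn f (Set.Icc 0 1)) (hg : ContinuousOn g (Set.Icc 0 1))
    (hfpos : ∀ x ∈ Set.Icc (0:ℝ) 1, 0 < f x)
    (hgpos : ∀ x ∈ Set.Icc (0:ℝ) 1, 0 < g x)
    (w₁ w₂ w₁' w₂' : ℝ → ℝ)
    (hw₁ : ∀ x ∈ Set.Icc (0:ℝ) 1, HasDerivWithinAt w₁ (w₁' x) (Set.Icc 0 1) x)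
    (hw₂ : ∀ x ∈ Set.Icc (0:ℝ) 1, HasDerivWithinAt w₂ (w₂' x) (Set.Icc 0 1) x)
    (hode₁ : ∀ x ∈ Set.Icc (0:ℝ) 1,
      HasDerivWithinAt (fun y => w₁' y / f y) (-(g x * w₁ x)) (Set.Icc 0 1) x)
    (hode₂ : ∀ x ∈ Set.Icc (0:ℝ) 1,
      HasDerivWithinAt (fun y => w₂' y / f y) (-(g x * w₂ x)) (Set.Icc 0 1) x)
    (hini₁ : w₁ 0 = 1 ∧ w₁' 0 / f 0 = 0)
    (hini₂ : w₂ 0 = 0 ∧ w₂' 0 / f 0 = 1)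
    (e₁ e₂ : ℂ)
    (he₁ : e₁ = (w₁' 1 / f 1 : ℝ) - Complex.I * (w₁ 1 : ℝ))
    (he₂ : e₂ = (w₂' 1 / f 1 : ℝ) - Complex.I * (w₂ 1 : ℝ)) :
    e₂ + Complex.I * e₁ ≠ 0 ∧
      4 / ‖(2 / (e₂ + Complex.I * e₁))‖ ^ 2 =
        (w₂' 1 / f 1) ^ 2 + (w₁' 1 / f 1) ^ 2 + (w₂ 1) ^ 2 + (w₁ 1) ^ 2 + 2 := by
  -- Wronskian
  set W : ℝ → ℝ := fun x => w₁ x * (w₂' x / f x) - w₂ x * (w₁' x / f x) with hW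
  have hWderiv : ∀ x ∈ Set.Icc (0:ℝ) 1, HasDerivWithinAt W 0 (Set.Icc 0 1) x := by
    intro x hx
    have h := (((hw₁ x hx).mul (hode₂ x hx)).sub ((hw₂ x hx).mul (hode₁ x hx)))
    have h' : HasDerivWithinAt W (w₁' x * (w₂' x / f x) + w₁ x * -(g x * w₂ x) - (w₂' x * (w₁' x / f x) + w₂ x * -(g x * w₁ x))) (Set.Icc 0 1) x := h
    convert h' using 1
    ring
  have hWcont : ContinuousOn W (Set.Icc 0 1) := fun x hx => ((hWderiv x hx).continuousWithinAt)
  have hW1 : W 1 = W 0 := by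
    refine constant_of_has_deriv_right_zero hWcont (fun x hx => ?_) 1 (by norm_num)
    have hx' : x ∈ Set.Icc (0:ℝ) 1 := Set.Ico_subset_Icc_self hx
    refine (hWderiv x hx').mono_of_mem_nhdsWithin ?_
    have : Set.Ici x ∩ Set.Iio 1 ⊆ Set.Icc 0 1 := fun y hy =>
      ⟨le_trans hx.1 hy.1, le_of_lt hy.2⟩
    exact Filter.mem_of_superset
      (Filter.inter_mem self_mem_nhdsWithin (mem_nhdsWithin_of_mem_nhds (Iio_mem_nhds hx.2))) this
  have hW0 : W 0 = 1 := by
    simp [hW, hini₁.1, hini₁.2, hini₂.1, hini₂.2]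
  have hWr : w₁ 1 * (w₂' 1 / f 1) - w₂ 1 * (w₁' 1 / f 1) = 1 := by
    have := hW1.trans hW0
    simpa [hW] using this
  set a := w₂' 1 / f 1
  set b := w₁' 1 / f 1
  set c := w₂ 1
  set d := w₁ 1
  have hz : e₂ + Complex.I * e₁ = Complex.mk (a + d) (b - c) := by
    rw [he₁, he₂]
    apply Complex.ext <;> simp [Complex.ext_iff] <;> ring
  have habs : ‖e₂ + Complex.I * e₁‖ ^ 2 = a^2 + b^2 + c^2 + d^2 + 2 := by
    rw [hz, Complex.sq_norm, Complex.normSq_mk]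
    have : d * a - c * b = 1 := hWr
    nlinarith [this]
  have hpos : (0:ℝ) < a^2 + b^2 + c^2 + d^2 + 2 := by positivity
  have hne : e₂ + Complex.I * e₁ ≠ 0 := by
    intro h
    rw [h] at habs
    simp at habs
    linarith
  refine ⟨hne, ?_⟩
  rw [norm_div, div_pow, Complex.norm_two]
  rw [habs]
  rw [div_div_eq_mul_div]; ring
end

section
/- Let U, V : [0,1] → ℂ⁴ be solutions of Z' = (i/η)·B(t)·Z where D·B = Bᵀ·D with D as above, satisfying the pointwise conservation laws conj(V)ᵀ·D·U = 0, conj(U)ᵀ·D·U = −2, conj(V)ᵀ·D·V = −2 on [0,1]. Define C₁ = (U₁−U₂, U₃−U₄) ∈ ℂ² and C₂ = (V₁−V₂, V₃−V₄) ∈ ℂ². Then the 2×2 determinant det[[U₁−U₂, V₁−V₂],[U₃−U₄, V₃−V₄]] has modulus at least 2. -/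
set_option autoImplicit false

open scoped Matrix
open ComplexConjugate

/-- the determinant of the boundary matrix has modulus at least 2. -/
theorem stmt_5 (η : ℝ) (hη : η ≠ 0)
    (B : ℝ → Matrix (Fin 4) (Fin 4) ℂ)
    (D : Matrix (Fin 4) (Fin 4) ℂ)
    (hD : D = !![0,1,0,0; 1,0,0,0; 0,0,0,1; 0,0,1,0])
    (hsym : ∀ τ ∈ Set.Icc (0:ℝ) 1, D * B τ = (B τ)ᵀ * D)
    (U V : ℝ → Fin 4 → ℂ)
    (hU : ∀ τ ∈ Set.Icc (0:ℝ) 1,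
      HasDerivWithinAt U ((Complex.I / η) • (B τ).mulVec (U τ)) (Set.Icc 0 1) τ)
    (hV : ∀ τ ∈ Set.Icc (0:ℝ) 1,
      HasDerivWithinAt V ((Complex.I / η) • (B τ).mulVec (V τ)) (Set.Icc 0 1) τ)
    (hVU : ∀ τ ∈ Set.Icc (0:ℝ) 1, (star (V τ)) ⬝ᵥ D.mulVec (U τ) = 0)
    (hUU : ∀ τ ∈ Set.Icc (0:ℝ) 1, (star (U τ)) ⬝ᵥ D.mulVec (U τ) = -2)
    (hVV : ∀ τ ∈ Set.Icc (0:ℝ) 1, (star (V τ)) ⬝ᵥ D.mulVec (V τ) = -2) :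
    ∀ τ ∈ Set.Icc (0:ℝ) 1,
      2 ≤ ‖(U τ 0 - U τ 1) * (V τ 2 - V τ 3)
            - (V τ 0 - V τ 1) * (U τ 2 - U τ 3)‖ := by
  intro τ hτ
  subst hD
  set u : Fin 4 → ℂ := U τ with hu
  set v : Fin 4 → ℂ := V τ with hv
  have hE1 : conj (v 0) * u 1 + conj (v 1) * u 0 + conj (v 2) * u 3 + conj (v 3) * u 2 = 0 := by
    have h := hVU τ hτ
    simp [dotProduct, Matrix.mulVec, Fin.sum_univ_four, Pi.star_apply, RingHom.star_def,
      Matrix.vecHead, Matrix.vecTail, ← hu, ← hv] at h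
    linear_combination h
  have hE2 : conj (u 0) * u 1 + conj (u 1) * u 0 + conj (u 2) * u 3 + conj (u 3) * u 2 = -2 := by
    have h := hUU τ hτ
    simp [dotProduct, Matrix.mulVec, Fin.sum_univ_four, Pi.star_apply, RingHom.star_def,
      Matrix.vecHead, Matrix.vecTail, ← hu] at h
    linear_combination h
  have hE3 : conj (v 0) * v 1 + conj (v 1) * v 0 + conj (v 2) * v 3 + conj (v 3) * v 2 = -2 := by
    have h := hVV τ hτ
    simp [dotProduct, Matrix.mulVec, Fin.sum_univ_four, Pi.star_apply, RingHom.star_def,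
      Matrix.vecHead, Matrix.vecTail, ← hv] at h
    linear_combination h
  have hE1' : v 0 * conj (u 1) + v 1 * conj (u 0) + v 2 * conj (u 3) + v 3 * conj (u 2) = 0 := by
    have h := congrArg (starRingEnd ℂ) hE1
    simp only [map_add, map_mul, map_zero, Complex.conj_conj] at h
    linear_combination h
  set K : ℂ := (u 0 - u 1) * (v 2 - v 3) - (v 0 - v 1) * (u 2 - u 3) with hK
  have key : K * conj K =
      4 + 2*((Complex.normSq (u 0) : ℂ) + Complex.normSq (u 1) + Complex.normSq (u 2)
            + Complex.normSq (u 3))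
        + 2*((Complex.normSq (v 0) : ℂ) + Complex.normSq (v 1) + Complex.normSq (v 2)
            + Complex.normSq (v 3))
        + (Complex.normSq (u 0 * v 1 - u 1 * v 0) : ℂ)
        + (Complex.normSq (u 0 * v 2 - u 2 * v 0) : ℂ)
        + (Complex.normSq (u 0 * v 3 - u 3 * v 0) : ℂ)
        + (Complex.normSq (u 1 * v 2 - u 2 * v 1) : ℂ)
        + (Complex.normSq (u 1 * v 3 - u 3 * v 1) : ℂ)
        + (Complex.normSq (u 2 * v 3 - u 3 * v 2) : ℂ) := by
    simp only [← Complex.mul_conj, hK, map_sub, map_mul]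
    linear_combination
      ((conj (v 0) * v 1 + conj (v 1) * v 0 + conj (v 2) * v 3 + conj (v 3) * v 2)
        - (v 0 * conj (v 0) + v 1 * conj (v 1) + v 2 * conj (v 2) + v 3 * conj (v 3))) * hE2
      + (-(u 0 * conj (u 0) + u 1 * conj (u 1) + u 2 * conj (u 2) + u 3 * conj (u 3)) - 2) * hE3
      + ((v 0 * conj (u 0) + v 1 * conj (u 1) + v 2 * conj (u 2) + v 3 * conj (u 3))
        - (v 0 * conj (u 1) + v 1 * conj (u 0) + v 2 * conj (u 3) + v 3 * conj (u 2))) * hE1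
      + (u 0 * conj (v 0) + u 1 * conj (v 1) + u 2 * conj (v 2) + u 3 * conj (v 3)) * hE1'
  rw [Complex.mul_conj] at key
  have keyR : Complex.normSq K =
      4 + 2*(Complex.normSq (u 0) + Complex.normSq (u 1) + Complex.normSq (u 2)
            + Complex.normSq (u 3))
        + 2*(Complex.normSq (v 0) + Complex.normSq (v 1) + Complex.normSq (v 2)
            + Complex.normSq (v 3))
        + Complex.normSq (u 0 * v 1 - u 1 * v 0)
        + Complex.normSq (u 0 * v 2 - u 2 * v 0)
        + Complex.normSq (u 0 * v 3 - u 3 * v 0)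
        + Complex.normSq (u 1 * v 2 - u 2 * v 1)
        + Complex.normSq (u 1 * v 3 - u 3 * v 1)
        + Complex.normSq (u 2 * v 3 - u 3 * v 2) := by
    exact_mod_cast key
  have h4 : (4:ℝ) ≤ Complex.normSq K := by
    have n1 := Complex.normSq_nonneg (u 0); have n2 := Complex.normSq_nonneg (u 1)
    have n3 := Complex.normSq_nonneg (u 2); have n4 := Complex.normSq_nonneg (u 3)
    have m1 := Complex.normSq_nonneg (v 0); have m2 := Complex.normSq_nonneg (v 1)
    have m3 := Complex.normSq_nonneg (v 2); have m4 := Complex.normSq_nonneg (v 3)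
    have w1 := Complex.normSq_nonneg (u 0 * v 1 - u 1 * v 0)
    have w2 := Complex.normSq_nonneg (u 0 * v 2 - u 2 * v 0)
    have w3 := Complex.normSq_nonneg (u 0 * v 3 - u 3 * v 0)
    have w4 := Complex.normSq_nonneg (u 1 * v 2 - u 2 * v 1)
    have w5 := Complex.normSq_nonneg (u 1 * v 3 - u 3 * v 1)
    have w6 := Complex.normSq_nonneg (u 2 * v 3 - u 3 * v 2)
    linarith [keyR]
  have habs : ‖K‖ = Real.sqrt (Complex.normSq K) := Complex.norm_def K
  rw [habs]
  have h2 : (2:ℝ) = Real.sqrt 4 := by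
    rw [show (4:ℝ) = 2^2 by norm_num, Real.sqrt_sq (by norm_num : (0:ℝ) ≤ 2)]
  rw [h2]
  exact Real.sqrt_le_sqrt h4
end

section
/- Let f : [0,∞) → ℝ be continuous with compact support, and let F₀f(r) = ∫₀^∞ v·f(v)·J₀(rv) dv be its Hankel transform of order 0, where J₀ is the Bessel function of the first kind of order 0. Then for every a > 0, ∫₀^∞ (v·f(v))/√(a² + v²) dv = ∫₀^∞ e^{−a·r}·F₀f(r) dr, i.e. the left side equals the Laplace transform of F₀f evaluated at a. -/
set_option autoImplicit false

open MeasureTheory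

/-- Bessel function of the first kind of order 0, via its integral representation. -/
noncomputable def besselJ0 (x : ℝ) : ℝ :=
  (1 / Real.pi) * ∫ θ in (0:ℝ)..Real.pi, Real.cos (x * Real.sin θ)

/-- Hankel transform of order 0. -/
noncomputable def hankel0 (f : ℝ → ℝ) (r : ℝ) : ℝ :=
  ∫ v in Set.Ioi (0:ℝ), v * f v * besselJ0 (r * v)

open Real Filter Set

lemma lemA (a b : ℝ) (ha : 0 < a) :
    ∫ r in Set.Ioi (0:ℝ), Real.exp (-a * r) * Real.cos (b * r) = a / (a ^ 2 + b ^ 2) := by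
  have hab : (0:ℝ) < a ^ 2 + b ^ 2 := by positivity
  set F : ℝ → ℝ := fun r => Real.exp (-a * r) * (b * Real.sin (b * r) - a * Real.cos (b * r)) / (a ^ 2 + b ^ 2) with hF
  have hderiv : ∀ r : ℝ, HasDerivAt F (Real.exp (-a * r) * Real.cos (b * r)) r := by
    intro r
    have h1 : HasDerivAt (fun r : ℝ => Real.exp (-a * r)) (Real.exp (-a * r) * (-a)) r := by
      simpa using ((hasDerivAt_id r).const_mul (-a)).exp
    have h2 : HasDerivAt (fun r : ℝ => b * Real.sin (b * r) - a * Real.cos (b * r))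
        (b * (Real.cos (b * r) * b) - a * (-Real.sin (b * r) * b)) r := by
      have hs : HasDerivAt (fun r : ℝ => Real.sin (b * r)) (Real.cos (b * r) * b) r := by
        simpa using ((hasDerivAt_id r).const_mul b).sin
      have hc : HasDerivAt (fun r : ℝ => Real.cos (b * r)) (-Real.sin (b * r) * b) r := by
        simpa using ((hasDerivAt_id r).const_mul b).cos
      exact (hs.const_mul b).sub (hc.const_mul a)
    have := (h1.mul h2).div_const (a ^ 2 + b ^ 2)
    refine this.congr_deriv ?_
    symm
    field_simp
    ring
  have hint : IntegrableOn (fun r => Real.exp (-a * r) * Real.cos (b * r)) (Set.Ioi (0:ℝ)) := by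
    apply Integrable.mono' (exp_neg_integrableOn_Ioi 0 ha)
    · exact (((continuous_const.mul continuous_id).rexp).mul
        (Real.continuous_cos.comp (continuous_const.mul continuous_id))).aestronglyMeasurable
    · filter_upwards with r
      rw [norm_mul, Real.norm_eq_abs, Real.norm_eq_abs, Real.abs_exp]
      nlinarith [abs_cos_le_one (b * r), Real.exp_pos (-a * r), abs_nonneg (Real.cos (b*r))]
  have hlim : Tendsto F atTop (nhds 0) := by
    have hg : Tendsto (fun r => (|b| + |a|) / (a ^ 2 + b ^ 2) * Real.exp (-a * r)) atTop (nhds 0) := by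
      rw [show (0:ℝ) = (|b| + |a|) / (a ^ 2 + b ^ 2) * 0 by ring]
      apply Tendsto.const_mul
      apply Real.tendsto_exp_atBot.comp
      exact (tendsto_id.const_mul_atTop_of_neg (neg_neg_iff_pos.mpr ha))
    refine squeeze_zero_norm (fun r => ?_) hg
    ·
      rw [hF]
      simp only
      rw [norm_div, Real.norm_eq_abs, Real.norm_eq_abs, abs_mul, Real.abs_exp,
        abs_of_pos hab, div_mul_eq_mul_div, div_le_div_iff_of_pos_right hab, mul_comm]
      gcongr
      calc |b * Real.sin (b*r) - a * Real.cos (b*r)| ≤ |b * Real.sin (b*r)| + |a * Real.cos (b*r)| := abs_sub _ _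
        _ ≤ |b| + |a| := by
            rw [abs_mul, abs_mul]
            gcongr
            · nlinarith [abs_sin_le_one (b*r), abs_nonneg b, abs_nonneg (Real.sin (b*r))]
            · nlinarith [abs_cos_le_one (b*r), abs_nonneg a, abs_nonneg (Real.cos (b*r))]
  have := integral_Ioi_of_hasDerivAt_of_tendsto' (f := F) (a := 0)
    (fun x _ => hderiv x) hint hlim
  rw [this, hF]
  simp
  field_simp

lemma gcont (a b : ℝ) (ha : 0 < a) :
    Continuous (fun θ : ℝ => a / (a ^ 2 + (b * Real.sin θ) ^ 2)) := by
  apply continuous_const.div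
  · fun_prop
  · intro θ; positivity

lemma lemB2 (a b : ℝ) (ha : 0 < a) :
    ∫ θ in (0:ℝ)..(Real.pi/2), a / (a ^ 2 + (b * Real.sin θ) ^ 2)
      = Real.pi / (2 * Real.sqrt (a ^ 2 + b ^ 2)) := by
  set c := Real.sqrt (a ^ 2 + b ^ 2) with hcdef
  have hc : 0 < c := Real.sqrt_pos.mpr (by positivity)
  have hc2 : c ^ 2 = a ^ 2 + b ^ 2 := Real.sq_sqrt (by positivity)
  set G : ℝ → ℝ := fun θ => (1 / c) * Real.arctan (c / a * Real.tan θ) with hG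
  set g : ℝ → ℝ := fun θ => a / (a ^ 2 + (b * Real.sin θ) ^ 2) with hg
  have hderiv : ∀ θ ∈ Set.Ioo (-(Real.pi/2)) (Real.pi/2), HasDerivAt G (g θ) θ := by
    intro θ hθ
    have hcos : Real.cos θ ≠ 0 := (Real.cos_pos_of_mem_Ioo hθ).ne'
    have ht : HasDerivAt Real.tan (1 / Real.cos θ ^ 2) θ := Real.hasDerivAt_tan hcos
    have harc : HasDerivAt (fun x : ℝ => Real.arctan (c / a * Real.tan x))
        (1 / (1 + (c / a * Real.tan θ) ^ 2) * (c / a * (1 / Real.cos θ ^ 2))) θ :=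
      (Real.hasDerivAt_arctan _).comp θ (ht.const_mul (c / a))
    have := harc.const_mul (1 / c)
    refine this.congr_deriv ?_
    symm
    rw [hg, Real.tan_eq_sin_div_cos]
    have hsc : Real.sin θ ^ 2 = 1 - Real.cos θ ^ 2 := by
      nlinarith [Real.sin_sq_add_cos_sq θ]
    field_simp
    linear_combination (Real.sin θ ^ 2) * hc2 + (a ^ 2) * (Real.sin_sq_add_cos_sq θ)
  have hx : ∀ x ∈ Set.Ico (0:ℝ) (Real.pi/2), ∫ θ in (0:ℝ)..x, g θ = G x := by
    intro x hx
    have : ∫ θ in (0:ℝ)..x, g θ = G x - G 0 := by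
      apply intervalIntegral.integral_eq_sub_of_hasDerivAt
      · intro θ hθ
        apply hderiv
        rcases hθ with ⟨h1, h2⟩
        simp only [min_def, max_def] at h1 h2
        constructor
        · have : (0:ℝ) ≤ θ := by split_ifs at h1 <;> linarith [hx.1]
          linarith [Real.pi_pos]
        · have : θ ≤ x := by split_ifs at h2 <;> linarith [hx.1]
          linarith [hx.2]
      · exact ((gcont a b ha).intervalIntegrable 0 x)
    rw [this, hG]
    simp
  have hΦcont : Continuous (fun x : ℝ => ∫ θ in (0:ℝ)..x, g θ) :=
    intervalIntegral.continuous_parametric_intervalIntegral_of_continuous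
      (f := fun _ : ℝ => g) ((gcont a b ha).comp continuous_snd) continuous_id
  have hlim1 : Tendsto (fun x : ℝ => ∫ θ in (0:ℝ)..x, g θ) (nhdsWithin (Real.pi/2) (Set.Iio (Real.pi/2)))
      (nhds (∫ θ in (0:ℝ)..(Real.pi/2), g θ)) :=
    (hΦcont.tendsto _).mono_left nhdsWithin_le_nhds
  have hlim2 : Tendsto (fun x : ℝ => ∫ θ in (0:ℝ)..x, g θ) (nhdsWithin (Real.pi/2) (Set.Iio (Real.pi/2)))
      (nhds (Real.pi / (2 * c))) := by
    have hGlim : Tendsto G (nhdsWithin (Real.pi/2) (Set.Iio (Real.pi/2))) (nhds (Real.pi / (2 * c))) := by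
      have h1 : Tendsto (fun x : ℝ => c / a * Real.tan x) (nhdsWithin (Real.pi/2) (Set.Iio (Real.pi/2))) atTop :=
        (Real.tendsto_tan_pi_div_two).const_mul_atTop (by positivity)
      have h2 : Tendsto (fun x : ℝ => Real.arctan (c / a * Real.tan x))
          (nhdsWithin (Real.pi/2) (Set.Iio (Real.pi/2))) (nhds (Real.pi/2)) :=
        (tendsto_nhds_of_tendsto_nhdsWithin Real.tendsto_arctan_atTop).comp h1
      have := h2.const_mul (1 / c)
      rw [show Real.pi / (2 * c) = 1 / c * (Real.pi / 2) by
        rw [div_mul_div_comm, one_mul, mul_comm c 2]]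
      exact this
    apply hGlim.congr'
    filter_upwards [Ioo_mem_nhdsLT_of_mem (by constructor <;> [positivity; rfl] :
      Real.pi/2 ∈ Set.Ioc (0:ℝ) (Real.pi/2))] with x hxx
    exact (hx x ⟨hxx.1.le, hxx.2⟩).symm
  have : (∫ θ in (0:ℝ)..(Real.pi/2), g θ) = Real.pi / (2 * c) :=
    tendsto_nhds_unique hlim1 hlim2
  rw [hg] at this
  rw [this]

lemma lemB (a b : ℝ) (ha : 0 < a) :
    ∫ θ in (0:ℝ)..Real.pi, a / (a ^ 2 + (b * Real.sin θ) ^ 2)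
      = Real.pi / Real.sqrt (a ^ 2 + b ^ 2) := by
  have hint : ∀ (u v : ℝ), IntervalIntegrable (fun θ : ℝ => a / (a ^ 2 + (b * Real.sin θ) ^ 2)) volume u v :=
    fun u v => (gcont a b ha).intervalIntegrable u v
  have hsplit : ∫ θ in (0:ℝ)..Real.pi, a / (a ^ 2 + (b * Real.sin θ) ^ 2)
      = (∫ θ in (0:ℝ)..(Real.pi/2), a / (a ^ 2 + (b * Real.sin θ) ^ 2))
        + ∫ θ in (Real.pi/2)..Real.pi, a / (a ^ 2 + (b * Real.sin θ) ^ 2) :=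
    (intervalIntegral.integral_add_adjacent_intervals (hint 0 (Real.pi/2)) (hint (Real.pi/2) Real.pi)).symm
  have hsym : ∫ θ in (Real.pi/2)..Real.pi, a / (a ^ 2 + (b * Real.sin θ) ^ 2)
      = ∫ θ in (0:ℝ)..(Real.pi/2), a / (a ^ 2 + (b * Real.sin θ) ^ 2) := by
    have := intervalIntegral.integral_comp_sub_left (a := 0) (b := Real.pi/2)
      (fun θ : ℝ => a / (a ^ 2 + (b * Real.sin θ) ^ 2)) Real.pi
    rw [show Real.pi - Real.pi/2 = Real.pi/2 by ring, sub_zero] at this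
    rw [← this]
    apply intervalIntegral.integral_congr
    intro θ _
    simp [Real.sin_pi_sub]
  rw [hsplit, hsym, lemB2 a b ha]
  have hc : 0 < Real.sqrt (a ^ 2 + b ^ 2) := Real.sqrt_pos.mpr (by positivity)
  field_simp
  ring

lemma besselJ0_continuous : Continuous besselJ0 := by
  unfold besselJ0
  apply continuous_const.mul
  exact intervalIntegral.continuous_parametric_intervalIntegral_of_continuous'
    (f := fun x θ => Real.cos (x * Real.sin θ)) (by fun_prop) 0 Real.pi

lemma abs_besselJ0_le (x : ℝ) : |besselJ0 x| ≤ 1 := by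
  unfold besselJ0
  rw [abs_mul, abs_of_pos (by positivity : (0:ℝ) < 1 / Real.pi)]
  have h := intervalIntegral.norm_integral_le_of_norm_le_const
    (C := 1) (f := fun θ => Real.cos (x * Real.sin θ)) (a := 0) (b := Real.pi)
    (fun θ _ => by rw [Real.norm_eq_abs]; exact Real.abs_cos_le_one _)
  rw [Real.norm_eq_abs] at h
  calc 1 / Real.pi * |∫ θ in (0:ℝ)..Real.pi, Real.cos (x * Real.sin θ)|
      ≤ 1 / Real.pi * (1 * |Real.pi - 0|) := by
        gcongr
    _ = 1 := by
        rw [sub_zero, abs_of_pos Real.pi_pos]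
        field_simp

lemma lemC (a v : ℝ) (ha : 0 < a) :
    ∫ r in Set.Ioi (0:ℝ), Real.exp (-a * r) * besselJ0 (r * v)
      = 1 / Real.sqrt (a ^ 2 + v ^ 2) := by
  have h1 : ∀ r : ℝ, Real.exp (-a * r) * besselJ0 (r * v)
      = (1 / Real.pi) * ∫ θ in Set.Ioc (0:ℝ) Real.pi,
          Real.exp (-a * r) * Real.cos ((v * Real.sin θ) * r) := by
    intro r
    unfold besselJ0
    rw [intervalIntegral.integral_of_le Real.pi_pos.le, mul_left_comm,
      ← MeasureTheory.integral_const_mul]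
    congr 1
    apply MeasureTheory.integral_congr_ae
    filter_upwards with θ
    ring_nf
  simp_rw [h1]
  rw [MeasureTheory.integral_const_mul]
  have hswap : ∫ r in Set.Ioi (0:ℝ), ∫ θ in Set.Ioc (0:ℝ) Real.pi,
        Real.exp (-a * r) * Real.cos ((v * Real.sin θ) * r)
      = ∫ θ in Set.Ioc (0:ℝ) Real.pi, ∫ r in Set.Ioi (0:ℝ),
        Real.exp (-a * r) * Real.cos ((v * Real.sin θ) * r) := by
    apply MeasureTheory.integral_integral_swap
    apply Integrable.mono'
      (g := fun p : ℝ × ℝ => Real.exp (-a * p.1) * 1)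
      (Integrable.mul_prod ((exp_neg_integrableOn_Ioi 0 ha))
        (MeasureTheory.integrableOn_const (C := (1:ℝ)) measure_Ioc_lt_top.ne))
    · apply Continuous.aestronglyMeasurable
      fun_prop
    · filter_upwards with p
      simp only [Function.uncurry]
      rw [norm_mul, Real.norm_eq_abs, Real.norm_eq_abs, Real.abs_exp, mul_one]
      nlinarith [Real.abs_cos_le_one ((v * Real.sin p.2) * p.1), Real.exp_pos (-a * p.1),
        abs_nonneg (Real.cos ((v * Real.sin p.2) * p.1))]
  rw [hswap]
  have h2 : ∀ θ : ℝ, ∫ r in Set.Ioi (0:ℝ),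
      Real.exp (-a * r) * Real.cos ((v * Real.sin θ) * r)
        = a / (a ^ 2 + (v * Real.sin θ) ^ 2) := fun θ => lemA a (v * Real.sin θ) ha
  simp_rw [h2]
  rw [← intervalIntegral.integral_of_le Real.pi_pos.le, lemB a v ha]
  rw [div_mul_div_comm, one_mul, mul_comm, ← div_div, div_right_comm,
    div_self (ne_of_gt Real.pi_pos)]

/-- the Laplace transform of the Hankel transform. -/
theorem stmt_13 (f : ℝ → ℝ) (hf : Continuous f) (hsupp : HasCompactSupport f) :
    ∀ a : ℝ, 0 < a →
      ∫ v in Set.Ioi (0:ℝ), v * f v / Real.sqrt (a ^ 2 + v ^ 2)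
        = ∫ r in Set.Ioi (0:ℝ), Real.exp (-a * r) * hankel0 f r := by
  intro a ha
  have hvf : Continuous (fun v : ℝ => v * f v) := continuous_id.mul hf
  have hvfsupp : HasCompactSupport (fun v : ℝ => v * f v) := hsupp.mul_left
  have hvfint : IntegrableOn (fun v : ℝ => |v * f v|) (Set.Ioi (0:ℝ)) :=
    ((hvf.abs.integrable_of_hasCompactSupport hvfsupp.abs).restrict)
  unfold hankel0
  simp_rw [← MeasureTheory.integral_const_mul]
  rw [MeasureTheory.integral_integral_swap]
  · apply MeasureTheory.integral_congr_ae
    filter_upwards with v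
    have : ∀ r : ℝ, Real.exp (-a * r) * (v * f v * besselJ0 (r * v))
        = (v * f v) * (Real.exp (-a * r) * besselJ0 (r * v)) := fun r => by ring
    simp_rw [this]
    rw [MeasureTheory.integral_const_mul, lemC a v ha]
    rw [mul_one_div, div_eq_div_iff (by positivity) (by positivity)]
  · apply Integrable.mono'
      (g := fun p : ℝ × ℝ => Real.exp (-a * p.1) * |p.2 * f p.2|)
      (Integrable.mul_prod (exp_neg_integrableOn_Ioi 0 ha) hvfint)
    · apply Continuous.aestronglyMeasurable
      exact ((continuous_const.mul continuous_fst).rexp).mul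
        (((continuous_snd.mul (hf.comp continuous_snd))).mul
          (besselJ0_continuous.comp (continuous_fst.mul continuous_snd)))
    · filter_upwards with p
      simp only [Function.uncurry]
      rw [norm_mul, Real.norm_eq_abs, Real.norm_eq_abs, Real.abs_exp, abs_mul]
      have h1 := abs_besselJ0_le (p.1 * p.2)
      have h2 : (0:ℝ) ≤ |p.2 * f p.2| := abs_nonneg _
      have h3 := Real.exp_pos (-a * p.1)
      nlinarith [mul_le_mul_of_nonneg_left (mul_le_of_le_one_right h2 h1) h3.le]
end

section
/- For all a > 0 and v ≥ 0, ∫₀^∞ e^{−a·r}·J₀(r·v) dr = 1/√(a² + v²), where J₀ is the Bessel function of the first kind of order 0. -/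
set_option autoImplicit false

open MeasureTheory

open Real Set Filter in
private lemma laplace_cos (a b : ℝ) (ha : 0 < a) :
    ∫ r in Set.Ioi (0:ℝ), Real.exp (-a * r) * Real.cos (b * r) = a / (a^2 + b^2) := by
  have hd : a^2 + b^2 ≠ 0 := by positivity
  have hint : IntegrableOn (fun r => Real.exp (-a*r) * Real.cos (b*r)) (Set.Ioi 0) := by
    apply (exp_neg_integrableOn_Ioi 0 ha).mono'
      ((by fun_prop : Continuous fun r => Real.exp (-a*r) * Real.cos (b*r)).aestronglyMeasurable)
    filter_upwards [] with r
    rw [Real.norm_eq_abs, abs_mul, abs_exp]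
    nlinarith [abs_cos_le_one (b*r), Real.exp_pos (-a*r), abs_nonneg (Real.cos (b*r))]
  have key := MeasureTheory.integral_Ioi_of_hasDerivAt_of_tendsto
    (f := fun r => Real.exp (-a*r) * (-a * Real.cos (b*r) + b * Real.sin (b*r)) / (a^2+b^2))
    (f' := fun r => Real.exp (-a*r) * Real.cos (b*r)) (a := 0) (m := 0)
    (((by fun_prop : Continuous fun r =>
        Real.exp (-a*r) * (-a * Real.cos (b*r) + b * Real.sin (b*r))).div_const
        _).continuousWithinAt) ?_ hint ?_
  · rw [key]; simp; field_simp
  · intro x hx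
    have h1 : HasDerivAt (fun r : ℝ => Real.exp (-a*r)) (-a * Real.exp (-a*x)) x := by
      simpa [mul_comm] using ((hasDerivAt_id x).const_mul (-a)).exp
    have h2 : HasDerivAt (fun r : ℝ => -a * Real.cos (b*r) + b * Real.sin (b*r))
        (a*b*Real.sin (b*x) + b*(b*Real.cos (b*x))) x := by
      have hc : HasDerivAt (fun r : ℝ => Real.cos (b*r)) (-Real.sin (b*x) * (b*1)) x :=
        ((hasDerivAt_id x).const_mul b).cos
      have hs : HasDerivAt (fun r : ℝ => Real.sin (b*r)) (Real.cos (b*x) * (b*1)) x :=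
        ((hasDerivAt_id x).const_mul b).sin
      have := (hc.const_mul (-a)).add (hs.const_mul b)
      refine this.congr_deriv ?_; ring
    have := ((h1.mul h2).div_const (a^2+b^2))
    refine this.congr_deriv ?_
    field_simp
    ring
  · have h0 : Filter.Tendsto (fun r : ℝ => (a + |b|)/(a^2+b^2) * Real.exp (-a*r))
        Filter.atTop (nhds 0) := by
      rw [show (0:ℝ) = (a + |b|)/(a^2+b^2) * 0 by ring]
      apply Filter.Tendsto.const_mul
      simpa using Real.tendsto_exp_comp_nhds_zero.mpr
        (Filter.Tendsto.const_mul_atTop_of_neg (neg_neg_iff_pos.mpr ha) Filter.tendsto_id)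
    have hdpos : (0:ℝ) < a^2 + b^2 := by positivity
    apply squeeze_zero_norm _ h0
    intro r
    rw [Real.norm_eq_abs, abs_div, abs_of_pos hdpos, div_mul_eq_mul_div]
    gcongr
    rw [abs_mul, abs_exp, mul_comm]
    apply mul_le_mul_of_nonneg_right _ (Real.exp_pos _).le
    calc |(-a * Real.cos (b*r) + b * Real.sin (b*r))|
        ≤ |(-a * Real.cos (b*r))| + |b * Real.sin (b*r)| := abs_add_le _ _
      _ ≤ a + |b| := by
          rw [abs_mul, abs_mul, abs_neg, abs_of_pos ha]
          have := abs_cos_le_one (b*r); have := abs_sin_le_one (b*r)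
          nlinarith [abs_nonneg b, abs_nonneg (Real.cos (b*r)), abs_nonneg (Real.sin (b*r))]

open Real Set Filter in
private lemma hasDerivAt_aux (a v : ℝ) (ha : 0 < a) (θ : ℝ)
    (hθ : θ ∈ Set.Ioo (-(π/2)) (π/2)) :
    HasDerivAt (fun t => (1/Real.sqrt (a^2+v^2)) * Real.arctan ((Real.sqrt (a^2+v^2)/a) * Real.tan t))
      (a / (a^2 + v^2 * Real.sin θ ^ 2)) θ := by
  set c := Real.sqrt (a^2+v^2) with hc
  have hcpos : 0 < c := Real.sqrt_pos.mpr (by positivity)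
  have hc2 : c^2 = a^2 + v^2 := Real.sq_sqrt (by positivity)
  have hcos : Real.cos θ ≠ 0 := (Real.cos_pos_of_mem_Ioo hθ).ne'
  have ht := (Real.hasDerivAt_tan hcos).const_mul (c/a)
  have hat := (Real.hasDerivAt_arctan ((c/a) * Real.tan θ)).comp θ ht
  have := hat.const_mul (1/c)
  refine this.congr_deriv ?_; symm
  rw [Real.tan_eq_sin_div_cos]
  have hden : a^2 + v^2 * Real.sin θ ^2 ≠ 0 := by positivity
  field_simp
  linear_combination (Real.sin θ^2) * hc2
    + (a^2) * Real.sin_sq_add_cos_sq θ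

open Real Set Filter intervalIntegral in
private lemma half_integral (a v : ℝ) (ha : 0 < a) :
    ∫ θ in (0:ℝ)..(π/2), a/(a^2+v^2*Real.sin θ^2) = π/(2*Real.sqrt (a^2+v^2)) := by
  have hF := hasDerivAt_aux a v ha
  set c := Real.sqrt (a^2+v^2) with hc
  set F := fun t => (1/c) * Real.arctan ((c/a) * Real.tan t) with hFdef
  set g := fun θ : ℝ => a/(a^2+v^2*Real.sin θ^2) with hg
  have hcpos : 0 < c := Real.sqrt_pos.mpr (by positivity)
  have hgc : Continuous g := by
    apply Continuous.div continuous_const (by fun_prop)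
    intro x; positivity
  have hP : Continuous (fun b => ∫ θ in (0:ℝ)..b, g θ) :=
    intervalIntegral.continuous_primitive (fun _ _ => hgc.intervalIntegrable _ _) 0
  have h1 : Tendsto (fun b => ∫ θ in (0:ℝ)..b, g θ) (nhdsWithin (π/2) (Set.Iio (π/2)))
      (nhds (∫ θ in (0:ℝ)..(π/2), g θ)) :=
    (hP.tendsto _).mono_left nhdsWithin_le_nhds
  have h2 : Tendsto F (nhdsWithin (π/2) (Set.Iio (π/2))) (nhds ((1/c) * (π/2))) := by
    apply Tendsto.const_mul
    apply (tendsto_nhds_of_tendsto_nhdsWithin Real.tendsto_arctan_atTop).comp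
    exact (Real.tendsto_tan_pi_div_two.const_mul_atTop (by positivity)).comp tendsto_id
  have heq : ∀ᶠ b in nhdsWithin (π/2) (Set.Iio (π/2)), (∫ θ in (0:ℝ)..b, g θ) = F b := by
    filter_upwards [Ioo_mem_nhdsLT_of_mem (by constructor <;> [linarith [Real.pi_pos]; rfl] :
        (π/2 : ℝ) ∈ Set.Ioc 0 (π/2))] with b hb
    have hb0 : 0 < b := hb.1
    have hb2 : b < π/2 := hb.2
    have : (∫ θ in (0:ℝ)..b, g θ) = F b - F 0 := by
      apply intervalIntegral.integral_eq_sub_of_hasDerivAt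
      · intro x hx
        rw [Set.uIcc_of_le hb0.le] at hx
        exact hF x ⟨by linarith [hx.1, Real.pi_pos], lt_of_le_of_lt hx.2 hb2⟩
      · exact (hgc.intervalIntegrable _ _)
    simp [this, hFdef, Real.tan_zero]
  have := tendsto_nhds_unique (h1.congr' heq) h2
  rw [this]; ring

open Real Set Filter

/-- `∫₀^∞ e^{-ar} J₀(rv) dr = 1/√(a²+v²)`. -/
theorem stmt_14 (a v : ℝ) (ha : 0 < a) (hv : 0 ≤ v) :
    ∫ r in Set.Ioi (0:ℝ), Real.exp (-a * r) * besselJ0 (r * v)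
      = 1 / Real.sqrt (a ^ 2 + v ^ 2) := by
  have laplace := fun b => laplace_cos a b ha
  have halfint := half_integral a v ha
  simp only [besselJ0]
  have hπ := Real.pi_pos
  set c := Real.sqrt (a^2+v^2) with hc
  have hcpos : 0 < c := Real.sqrt_pos.mpr (by positivity)
  have step1 : ∀ r : ℝ, Real.exp (-a * r) *
      ((1 / Real.pi) * ∫ θ in (0:ℝ)..Real.pi, Real.cos ((r * v) * Real.sin θ))
      = (1/Real.pi) * ∫ θ in Set.Ioc (0:ℝ) Real.pi, Real.exp (-a*r) * Real.cos (v * Real.sin θ * r) := by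
    intro r
    simp_rw [show ∀ θ : ℝ, r * v * Real.sin θ = v * Real.sin θ * r from fun θ => by ring]
    rw [intervalIntegral.integral_of_le hπ.le,
      show Real.exp (-a*r) * ((1/Real.pi) * ∫ θ in Set.Ioc (0:ℝ) Real.pi, Real.cos (v * Real.sin θ * r))
        = (1/Real.pi) * (Real.exp (-a*r) * ∫ θ in Set.Ioc (0:ℝ) Real.pi, Real.cos (v * Real.sin θ * r)) by ring,
      ← integral_const_mul]
  simp_rw [step1]
  rw [integral_const_mul]
  have hint : Integrable (fun p : ℝ × ℝ => Real.exp (-a*p.1) * Real.cos (v * Real.sin p.2 * p.1))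
      ((volume.restrict (Set.Ioi 0)).prod (volume.restrict (Set.Ioc 0 Real.pi))) := by
    have hbase : Integrable (fun p : ℝ × ℝ => Real.exp (-a*p.1) * (1:ℝ))
        ((volume.restrict (Set.Ioi 0)).prod (volume.restrict (Set.Ioc 0 Real.pi))) :=
      Integrable.mul_prod (exp_neg_integrableOn_Ioi 0 ha) (integrable_const 1)
    apply hbase.mono'
      ((by fun_prop : Continuous fun p : ℝ × ℝ =>
        Real.exp (-a*p.1) * Real.cos (v * Real.sin p.2 * p.1)).aestronglyMeasurable)
    filter_upwards [] with p
    rw [Real.norm_eq_abs, abs_mul, abs_exp]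
    nlinarith [abs_cos_le_one (v * Real.sin p.2 * p.1), Real.exp_pos (-a*p.1),
      abs_nonneg (Real.cos (v * Real.sin p.2 * p.1))]
  rw [MeasureTheory.integral_integral_swap hint]
  have step3 : ∀ θ : ℝ, (∫ r in Set.Ioi (0:ℝ), Real.exp (-a*r) * Real.cos (v * Real.sin θ * r))
      = a / (a^2 + v^2 * Real.sin θ ^ 2) := by
    intro θ
    rw [laplace (v * Real.sin θ)]
    ring_nf
  simp_rw [step3]
  have hsym : ∫ θ in Set.Ioc (0:ℝ) Real.pi, a/(a^2+v^2*Real.sin θ^2)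
      = 2 * (π/(2*c)) := by
    rw [← intervalIntegral.integral_of_le hπ.le]
    have hadj : ∫ θ in (0:ℝ)..π, a/(a^2+v^2*Real.sin θ^2)
        = (∫ θ in (0:ℝ)..(π/2), a/(a^2+v^2*Real.sin θ^2))
          + ∫ θ in (π/2)..π, a/(a^2+v^2*Real.sin θ^2) := by
      rw [intervalIntegral.integral_add_adjacent_intervals] <;>
        · apply Continuous.intervalIntegrable
          apply Continuous.div continuous_const (by fun_prop)
          intro x; positivity
    have hrefl : (∫ θ in (π/2)..π, a/(a^2+v^2*Real.sin θ^2))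
        = ∫ θ in (0:ℝ)..(π/2), a/(a^2+v^2*Real.sin θ^2) := by
      have h := intervalIntegral.integral_comp_sub_left
        (a := 0) (b := π/2) (fun θ => a/(a^2+v^2*Real.sin θ^2)) π
      simp only [Real.sin_pi_sub] at h
      rw [show π - π/2 = π/2 by ring, sub_zero] at h
      exact h.symm
    rw [hadj, hrefl, halfint]; ring
  rw [hsym]
  field_simp
end

section
/- Let q, q̃ : [0,1] → ℝ be continuous with ‖q̃ − q‖_{C⁰} ≤ ε, let η, λ, α > 0, and let u, v : [0,1] → ℝ solve η²u'' + (λ² + η^α q)u = 0 and η²v'' + (λ² + η^α q̃)v = 0 with the same initial conditions u(0) = v(0), u'(0) = v'(0). Assume v and v' are bounded: |v|, (η/λ)|v'| ≤ M on [0,1], and the Green's kernel bound |G(x,y)| ≤ M²·ε for G(x,y) = (v₂(x)v₁(y) − v₁(x)v₂(y))·(q̃(y) − q(y)) where v₁, v₂ are fundamental solutions of the q̃-equation normalized so |vᵢ|, (η/λ)|vᵢ'| ≤ M. Then ‖u − v‖_{C⁰([0,1])} ≤ K·(η^{α−1}/λ)·ε for a constant K depending only on M, provided (η^{α−1}/λ)·M²·ε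 ≤ 1/2. -/
set_option autoImplicit false
open Set intervalIntegral MeasureTheory

lemma stmt18_ftcIcc {g : ℝ → ℝ} (hg : ContinuousOn g (Set.Icc 0 1)) {x : ℝ}
    (hx : x ∈ Set.Icc (0:ℝ) 1) :
    HasDerivWithinAt (fun t => ∫ y in (0:ℝ)..t, g y) (g x) (Set.Icc 0 1) x := by
  haveI : Fact (x ∈ Set.Icc (0:ℝ) 1) := ⟨hx⟩
  refine intervalIntegral.integral_hasDerivWithinAt_right ?_ ?_ (hg x hx)
  · exact (hg.mono (by rw [Set.uIcc_of_le hx.1]; exact Set.Icc_subset_Icc le_rfl hx.2)).intervalIntegrable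
  · exact hg.stronglyMeasurableAtFilter_nhdsWithin measurableSet_Icc x

lemma stmt18_intInt {g : ℝ → ℝ} (hg : ContinuousOn g (Set.Icc 0 1)) {t : ℝ}
    (ht : t ∈ Set.Icc (0:ℝ) 1) : IntervalIntegrable g MeasureTheory.volume 0 t :=
  (hg.mono (by rw [Set.uIcc_of_le ht.1]; exact Set.Icc_subset_Icc le_rfl ht.2)).intervalIntegrable

lemma stmt18_ici {f : ℝ → ℝ} {d x : ℝ} (hx : x ∈ Set.Ico (0:ℝ) 1)
    (h : HasDerivWithinAt f d (Set.Icc 0 1) x) : HasDerivWithinAt f d (Set.Ici x) x :=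
  h.mono_of_mem_nhdsWithin (Icc_mem_nhdsGE_of_mem hx)

/-- uniqueness: zero solution -/
lemma stmt18_zero {ψ ψ' Q : ℝ → ℝ} {C : ℝ}
    (hψ : ∀ t ∈ Set.Icc (0:ℝ) 1, HasDerivWithinAt ψ (ψ' t) (Set.Icc 0 1) t)
    (hψ' : ∀ t ∈ Set.Icc (0:ℝ) 1, HasDerivWithinAt ψ' (-Q t * ψ t) (Set.Icc 0 1) t)
    (hQ : ∀ t ∈ Set.Icc (0:ℝ) 1, |Q t| ≤ C)
    (h0 : ψ 0 = 0) (h0' : ψ' 0 = 0) : ∀ t ∈ Set.Icc (0:ℝ) 1, ψ t = 0 := by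
  set E : ℝ → ℝ := fun t => ψ t ^ 2 + ψ' t ^ 2 with hE
  set E' : ℝ → ℝ := fun t => 2 * (1 - Q t) * (ψ t * ψ' t) with hE'
  have hEnn : ∀ t, 0 ≤ E t := fun t => add_nonneg (sq_nonneg _) (sq_nonneg _)
  have hEd : ∀ t ∈ Set.Icc (0:ℝ) 1, HasDerivWithinAt E (E' t) (Set.Icc 0 1) t := by
    intro t ht
    have := ((hψ t ht).mul (hψ t ht)).add ((hψ' t ht).mul (hψ' t ht))
    have h2 : HasDerivWithinAt E
        (ψ' t * ψ t + ψ t * ψ' t + (-Q t * ψ t * ψ' t + ψ' t * (-Q t * ψ t)))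
        (Set.Icc 0 1) t := by
      simpa [hE, sq, Pi.mul_def, Pi.add_def] using this
    convert h2 using 1; simp only [hE']; ring
  have key : ∀ x ∈ Set.Icc (0:ℝ) 1, ‖E x‖ ≤ gronwallBound 0 (1 + |C|) 0 (x - 0) := by
    refine norm_le_gronwallBound_of_norm_deriv_right_le
      (fun t ht => (hEd t ht).continuousWithinAt) (fun x hx => stmt18_ici hx (hEd x (Set.Ico_subset_Icc_self hx)))
      (by simp [hE, h0, h0']) ?_
    intro x hx
    have hx' := Set.Ico_subset_Icc_self hx
    have h1 : |Q x| ≤ |C| := (hQ x hx').trans (le_abs_self _)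
    have h2 : 2 * |ψ x| * |ψ' x| ≤ ψ x ^ 2 + ψ' x ^ 2 := by nlinarith [sq_nonneg (|ψ x| - |ψ' x|), sq_abs (ψ x), sq_abs (ψ' x)]
    have h3 : ‖E x‖ = E x := Real.norm_of_nonneg (hEnn x)
    simp only [Real.norm_eq_abs, hE', h3, hE]
    have : |2 * (1 - Q x) * (ψ x * ψ' x)| ≤ (1 + |C|) * (ψ x ^ 2 + ψ' x ^ 2) := by
      rw [abs_mul, abs_mul]
      have hq : |1 - Q x| ≤ 1 + |C| := by
        calc |1 - Q x| ≤ |(1:ℝ)| + |Q x| := abs_sub _ _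
        _ ≤ 1 + |C| := by simp [h1]
      calc |2| * |1 - Q x| * |ψ x * ψ' x| = |1 - Q x| * (2 * |ψ x| * |ψ' x|) := by
            rw [abs_mul]; simp [abs_of_nonneg]; ring
        _ ≤ (1 + |C|) * (ψ x ^ 2 + ψ' x ^ 2) := by
            apply mul_le_mul hq h2 (by positivity) (by positivity)
    rw [abs_of_nonneg (add_nonneg (sq_nonneg (ψ x)) (sq_nonneg (ψ' x)))]
    linarith [this]
  intro t ht
  have := key t ht
  rw [gronwallBound_ε0, zero_mul] at this
  have hE0 : E t = 0 := le_antisymm (by simpa [Real.norm_of_nonneg (hEnn t)] using this) (hEnn t)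
  have : ψ t ^ 2 = 0 := by
    have h4 : ψ t ^ 2 + ψ' t ^ 2 = 0 := hE0
    nlinarith [sq_nonneg (ψ t), sq_nonneg (ψ' t)]
  exact pow_eq_zero_iff (two_ne_zero) |>.mp this

set_option maxHeartbeats 2000000 in
/-- Duhamel/Gronwall stability estimate for the perturbed oscillator. -/
theorem stmt_18 (M : ℝ) (hM : 0 < M) :
    ∃ K : ℝ, 0 < K ∧
      ∀ (q qt : ℝ → ℝ) (η lam α ε : ℝ)
        (u u' v v' v₁ v₁' v₂ v₂' : ℝ → ℝ),
        ContinuousOn q (Set.Icc 0 1) → ContinuousOn qt (Set.Icc 0 1) →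
        0 < η → 0 < lam → 0 < α → 0 < ε →
        (∀ t ∈ Set.Icc (0:ℝ) 1, |qt t - q t| ≤ ε) →
        (∀ t ∈ Set.Icc (0:ℝ) 1, HasDerivWithinAt u (u' t) (Set.Icc 0 1) t) →
        (∀ t ∈ Set.Icc (0:ℝ) 1,
          HasDerivWithinAt u' (-((lam ^ 2 + η ^ α * q t) / η ^ 2) * u t) (Set.Icc 0 1) t) →
        (∀ t ∈ Set.Icc (0:ℝ) 1, HasDerivWithinAt v (v' t) (Set.Icc 0 1) t) →
        (∀ t ∈ Set.Icc (0:ℝ) 1,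
          HasDerivWithinAt v' (-((lam ^ 2 + η ^ α * qt t) / η ^ 2) * v t) (Set.Icc 0 1) t) →
        u 0 = v 0 → u' 0 = v' 0 →
        (∀ t ∈ Set.Icc (0:ℝ) 1, |v t| ≤ M ∧ (η / lam) * |v' t| ≤ M) →
        (∀ t ∈ Set.Icc (0:ℝ) 1, HasDerivWithinAt v₁ (v₁' t) (Set.Icc 0 1) t) →
        (∀ t ∈ Set.Icc (0:ℝ) 1,
          HasDerivWithinAt v₁' (-((lam ^ 2 + η ^ α * qt t) / η ^ 2) * v₁ t) (Set.Icc 0 1) t) →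
        (∀ t ∈ Set.Icc (0:ℝ) 1, HasDerivWithinAt v₂ (v₂' t) (Set.Icc 0 1) t) →
        (∀ t ∈ Set.Icc (0:ℝ) 1,
          HasDerivWithinAt v₂' (-((lam ^ 2 + η ^ α * qt t) / η ^ 2) * v₂ t) (Set.Icc 0 1) t) →
        v₁ 0 = 1 → v₁' 0 = 0 → v₂ 0 = 0 → (η / lam) * v₂' 0 = 1 →
        (∀ t ∈ Set.Icc (0:ℝ) 1,
          (|v₁ t| ≤ M ∧ (η / lam) * |v₁' t| ≤ M) ∧ (|v₂ t| ≤ M ∧ (η / lam) * |v₂' t| ≤ M)) →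
        (∀ x ∈ Set.Icc (0:ℝ) 1, ∀ y ∈ Set.Icc (0:ℝ) 1,
          |(v₂ x * v₁ y - v₁ x * v₂ y) * (qt y - q y)| ≤ M ^ 2 * ε) →
        (η ^ (α - 1) / lam) * M ^ 2 * ε ≤ 1 / 2 →
        ∀ t ∈ Set.Icc (0:ℝ) 1, |u t - v t| ≤ K * (η ^ (α - 1) / lam) * ε := by
  refine ⟨2 * M ^ 3, by positivity, ?_⟩
  intro q qt η lam α ε u u' v v' v₁ v₁' v₂ v₂' hq hqt hη hlam hα hε hqq hu hu'' hv hv''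
    h00 h00' hvM hw1 hw1'' hw2 hw2'' hv10 hv1'0 hv20 hv2'0 hVM hker hsmall
  have hη0 : η ≠ 0 := ne_of_gt hη
  have hlam0 : lam ≠ 0 := ne_of_gt hlam
  set I : Set ℝ := Set.Icc 0 1 with hI
  have hcu : ContinuousOn u I := fun s hs => (hu s hs).continuousWithinAt
  have hcv : ContinuousOn v I := fun s hs => (hv s hs).continuousWithinAt
  have hc1 : ContinuousOn v₁ I := fun s hs => (hw1 s hs).continuousWithinAt
  have hc1' : ContinuousOn v₁' I := fun s hs => (hw1'' s hs).continuousWithinAt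
  have hc2 : ContinuousOn v₂ I := fun s hs => (hw2 s hs).continuousWithinAt
  have hc2' : ContinuousOn v₂' I := fun s hs => (hw2'' s hs).continuousWithinAt
  have hηa : (0:ℝ) < η ^ α := Real.rpow_pos_of_pos hη α
  set c : ℝ := η ^ α / η ^ 2 with hc
  have hc0 : 0 < c := by positivity
  set f : ℝ → ℝ := fun y => c * ((qt y - q y) * u y) with hf
  have hcf : ContinuousOn f I := continuousOn_const.mul ((hqt.sub hq).mul hcu)
  set g₁ : ℝ → ℝ := fun y => v₁ y * f y with hg₁
  set g₂ : ℝ → ℝ := fun y => v₂ y * f y with hg₂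
  have hcg₁ : ContinuousOn g₁ I := hc1.mul hcf
  have hcg₂ : ContinuousOn g₂ I := hc2.mul hcf
  set F₁ : ℝ → ℝ := fun t => ∫ y in (0:ℝ)..t, g₁ y with hF₁
  set F₂ : ℝ → ℝ := fun t => ∫ y in (0:ℝ)..t, g₂ y with hF₂
  have hF₁d : ∀ x ∈ I, HasDerivWithinAt F₁ (g₁ x) I x := fun x hx => stmt18_ftcIcc hcg₁ hx
  have hF₂d : ∀ x ∈ I, HasDerivWithinAt F₂ (g₂ x) I x := fun x hx => stmt18_ftcIcc hcg₂ hx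
  set Q : ℝ → ℝ := fun s => (lam ^ 2 + η ^ α * qt s) / η ^ 2 with hQ
  -- Wronskian is constant equal to lam / η
  set Wr : ℝ → ℝ := fun s => v₁ s * v₂' s - v₂ s * v₁' s with hWr
  have hWrd : ∀ x ∈ Set.Ico (0:ℝ) 1, HasDerivWithinAt Wr 0 (Set.Ici x) x := by
    intro x hx
    have hx' : x ∈ I := Set.Ico_subset_Icc_self hx
    have h := ((hw1 x hx').mul (hw2'' x hx')).sub ((hw2 x hx').mul (hw1'' x hx'))
    refine stmt18_ici hx ?_
    refine h.congr_deriv ?_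
    ring
  have hWconst : ∀ x ∈ I, Wr x = lam / η := by
    have hW0 : Wr 0 = lam / η := by
      have hv2' : v₂' 0 = lam / η := by
        rw [eq_div_iff hη0]
        field_simp at hv2'0
        linarith
      simp [hWr, hv10, hv20, hv1'0, hv2']
    intro x hx
    have h2 : Wr x = Wr 0 := constant_of_has_deriv_right_zero (f := Wr)
      (((hc1.mul hc2').sub (hc2.mul hc1'))) hWrd x hx
    rw [h2, hW0]
  -- w = u - v solves the inhomogeneous equation
  set w : ℝ → ℝ := fun s => u s - v s with hwdef
  set w' : ℝ → ℝ := fun s => u' s - v' s with hw'def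
  have hwd : ∀ s ∈ I, HasDerivWithinAt w (w' s) I s := fun s hs => (hu s hs).sub (hv s hs)
  have hwd' : ∀ s ∈ I, HasDerivWithinAt w' (-Q s * w s + f s) I s := by
    intro s hs
    have h := (hu'' s hs).sub (hv'' s hs)
    refine h.congr_deriv ?_
    simp only [hQ, hwdef, hf, hc]
    field_simp
    ring
  have hcw : ContinuousOn (fun y => |w y|) I := (hcu.sub hcv).abs
  -- φ via variation of constants
  set φ : ℝ → ℝ := fun s => (η / lam) * (v₂ s * F₁ s - v₁ s * F₂ s) with hφ
  set φ' : ℝ → ℝ := fun s => (η / lam) * (v₂' s * F₁ s - v₁' s * F₂ s) with hφ'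
  have hφd : ∀ s ∈ I, HasDerivWithinAt φ (φ' s) I s := by
    intro s hs
    have h := (((hw2 s hs).mul (hF₁d s hs)).sub ((hw1 s hs).mul (hF₂d s hs))).const_mul (η / lam)
    refine h.congr_deriv ?_
    simp only [hφ', hg₁, hg₂]
    ring
  have hφd' : ∀ s ∈ I, HasDerivWithinAt φ' (-Q s * φ s + f s) I s := by
    intro s hs
    have h := (((hw2'' s hs).mul (hF₁d s hs)).sub ((hw1'' s hs).mul (hF₂d s hs))).const_mul (η / lam)
    have hW := hWconst s hs
    have hWs : v₁ s * v₂' s - v₂ s * v₁' s = lam / η := hW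
    have heq : (η / lam) * ((-((lam ^ 2 + η ^ α * qt s) / η ^ 2) * v₂ s) * F₁ s + v₂' s * g₁ s
          - ((-((lam ^ 2 + η ^ α * qt s) / η ^ 2) * v₁ s) * F₂ s + v₁' s * g₂ s))
        = -Q s * φ s + f s := by
      simp only [hφ, hQ, hg₁, hg₂]
      rw [show (η / lam) * ((-((lam ^ 2 + η ^ α * qt s) / η ^ 2) * v₂ s) * F₁ s + v₂' s * (v₁ s * f s)
          - ((-((lam ^ 2 + η ^ α * qt s) / η ^ 2) * v₁ s) * F₂ s + v₁' s * (v₂ s * f s)))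
        = -((lam ^ 2 + η ^ α * qt s) / η ^ 2) * ((η / lam) * (v₂ s * F₁ s - v₁ s * F₂ s))
          + (η / lam) * ((v₁ s * v₂' s - v₂ s * v₁' s) * f s) from by ring, hWs]
      have hx : (η / lam) * ((lam / η) * f s) = f s := by field_simp
      rw [hx]
    rw [← heq]
    exact h
  -- ψ = w - φ vanishes
  set ψ : ℝ → ℝ := fun s => w s - φ s with hψ
  set ψ' : ℝ → ℝ := fun s => w' s - φ' s with hψ'
  have hψd : ∀ s ∈ I, HasDerivWithinAt ψ (ψ' s) I s := fun s hs => (hwd s hs).sub (hφd s hs)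
  have hψd' : ∀ s ∈ I, HasDerivWithinAt ψ' (-Q s * ψ s) I s := by
    intro s hs
    have h := (hwd' s hs).sub (hφd' s hs)
    refine h.congr_deriv ?_
    simp only [hψ]
    ring
  have hcQ : ContinuousOn Q I := (continuousOn_const.add (continuousOn_const.mul hqt)).div_const _
  obtain ⟨C, hC⟩ := isCompact_Icc.exists_bound_of_continuousOn hcQ
  have hψ0 : ψ 0 = 0 := by
    have : u 0 - v 0 = 0 := by rw [h00]; ring
    simp [hψ, hwdef, hφ, hF₁, hF₂, intervalIntegral.integral_same, this]
  have hψ'0 : ψ' 0 = 0 := by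
    have : u' 0 - v' 0 = 0 := by rw [h00']; ring
    simp [hψ', hw'def, hφ', hF₁, hF₂, intervalIntegral.integral_same, this]
  have hψzero : ∀ s ∈ I, ψ s = 0 :=
    stmt18_zero hψd hψd' (fun s hs => by simpa using hC s hs) hψ0 hψ'0
  have hwφ : ∀ s ∈ I, w s = φ s := by
    intro s hs
    have := hψzero s hs
    simp only [hψ] at this
    linarith
  -- main inequality
  set c₀ : ℝ := η ^ (α - 1) / lam * M ^ 2 * ε with hc₀
  have hra : (0:ℝ) < η ^ (α - 1) := Real.rpow_pos_of_pos hη _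
  have hc₀pos : 0 < c₀ := by
    refine mul_pos (mul_pos (div_pos hra hlam) (by positivity)) hε
  have hkey : (η / lam) * (c * (M ^ 2 * ε)) = c₀ := by
    rw [hc₀, hc, Real.rpow_sub hη, Real.rpow_one]
    field_simp
  set h : ℝ → ℝ := fun t => ∫ y in (0:ℝ)..t, |w y| with hhdef
  have hhnn : ∀ x ∈ I, 0 ≤ h x := by
    intro x hx
    exact intervalIntegral.integral_nonneg hx.1 fun y _ => abs_nonneg _
  have hint : ∀ s ∈ I, |w s| ≤ c₀ * h s + c₀ * M * s := by
    intro s hs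
    have hs0 : (0:ℝ) ≤ s := hs.1
    rw [hwφ s hs]
    have e1 : v₂ s * F₁ s - v₁ s * F₂ s = ∫ y in (0:ℝ)..s, (v₂ s * g₁ y - v₁ s * g₂ y) := by
      rw [intervalIntegral.integral_sub ((stmt18_intInt hcg₁ hs).const_mul _)
        ((stmt18_intInt hcg₂ hs).const_mul _), intervalIntegral.integral_const_mul,
        intervalIntegral.integral_const_mul]
    have hb : ∀ y ∈ Set.Icc (0:ℝ) s, |v₂ s * g₁ y - v₁ s * g₂ y| ≤ c * (M ^ 2 * ε) * (|w y| + M) := by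
      intro y hy
      have hyI : y ∈ I := ⟨hy.1, hy.2.trans hs.2⟩
      have hker' := hker s hs y hyI
      have huy : |u y| ≤ |w y| + M := by
        have h1 : |v y| ≤ M := (hvM y hyI).1
        have h2 : u y = w y + v y := by simp [hwdef]
        rw [h2]
        exact (abs_add_le _ _).trans (by linarith)
      have heq2 : v₂ s * g₁ y - v₁ s * g₂ y
          = ((v₂ s * v₁ y - v₁ s * v₂ y) * (qt y - q y)) * (c * u y) := by
        simp only [hg₁, hg₂, hf]; ring
      rw [heq2, abs_mul]
      rw [show |c * u y| = c * |u y| from by rw [abs_mul, abs_of_pos hc0]]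
      calc |(v₂ s * v₁ y - v₁ s * v₂ y) * (qt y - q y)| * (c * |u y|)
          ≤ (M ^ 2 * ε) * (c * (|w y| + M)) := by
            refine mul_le_mul hker' (mul_le_mul_of_nonneg_left huy hc0.le)
              (mul_nonneg hc0.le (abs_nonneg _)) ?_
            exact mul_nonneg (by positivity) hε.le
        _ = c * (M ^ 2 * ε) * (|w y| + M) := by ring
    have hInt1 : IntervalIntegrable (fun y => v₂ s * g₁ y - v₁ s * g₂ y) MeasureTheory.volume 0 s :=
      ((stmt18_intInt hcg₁ hs).const_mul _).sub ((stmt18_intInt hcg₂ hs).const_mul _)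
    have hInt2 : IntervalIntegrable (fun y => c * (M ^ 2 * ε) * (|w y| + M))
        MeasureTheory.volume 0 s :=
      (stmt18_intInt (hcw.add continuousOn_const) hs).const_mul _
    have e2 : |∫ y in (0:ℝ)..s, (v₂ s * g₁ y - v₁ s * g₂ y)|
        ≤ ∫ y in (0:ℝ)..s, c * (M ^ 2 * ε) * (|w y| + M) := by
      calc |∫ y in (0:ℝ)..s, (v₂ s * g₁ y - v₁ s * g₂ y)|
          ≤ ∫ y in (0:ℝ)..s, |v₂ s * g₁ y - v₁ s * g₂ y| := by
            simpa [Real.norm_eq_abs] using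
              intervalIntegral.norm_integral_le_integral_norm
                (f := fun y => v₂ s * g₁ y - v₁ s * g₂ y) (μ := MeasureTheory.volume) hs0
        _ ≤ _ := intervalIntegral.integral_mono_on hs0 hInt1.abs hInt2 hb
    have e3 : ∫ y in (0:ℝ)..s, c * (M ^ 2 * ε) * (|w y| + M)
        = c * (M ^ 2 * ε) * (h s + M * s) := by
      rw [intervalIntegral.integral_const_mul,
        intervalIntegral.integral_add (stmt18_intInt hcw hs) intervalIntegrable_const,
        intervalIntegral.integral_const]
      simp only [hhdef, smul_eq_mul, sub_zero]
      ring
    have hφs : |φ s| ≤ c₀ * (h s + M * s) := by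
      calc |φ s| = (η / lam) * |∫ y in (0:ℝ)..s, (v₂ s * g₁ y - v₁ s * g₂ y)| := by
            simp only [hφ]
            rw [abs_mul, abs_of_pos (div_pos hη hlam), e1]
        _ ≤ (η / lam) * (c * (M ^ 2 * ε) * (h s + M * s)) := by
            rw [← e3]
            exact mul_le_mul_of_nonneg_left e2 (div_pos hη hlam).le
        _ = c₀ * (h s + M * s) := by rw [← hkey]; ring
    linarith [hφs]
  -- Gronwall for h
  have hhd : ∀ x ∈ Set.Ico (0:ℝ) 1, HasDerivWithinAt h (|w x|) (Set.Ici x) x :=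
    fun x hx => stmt18_ici hx (stmt18_ftcIcc hcw (Set.Ico_subset_Icc_self hx))
  have hgron : ∀ x ∈ I, ‖h x‖ ≤ gronwallBound 0 c₀ (c₀ * M) (x - 0) := by
    refine norm_le_gronwallBound_of_norm_deriv_right_le
      (fun x hx => (stmt18_ftcIcc hcw hx).continuousWithinAt) hhd ?_ ?_
    · simp [hhdef]
    · intro x hx
      have hx' : x ∈ I := Set.Ico_subset_Icc_self hx
      have h1 := hint x hx'
      rw [Real.norm_eq_abs, Real.norm_eq_abs, abs_abs, abs_of_nonneg (hhnn x hx')]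
      nlinarith [hx.2, hx.1, mul_pos hc₀pos hM]
  -- conclude
  intro t ht
  have hg := hgron t ht
  rw [Real.norm_eq_abs, abs_of_nonneg (hhnn t ht), sub_zero,
    gronwallBound_of_K_ne_0 hc₀pos.ne'] at hg
  have hgt : h t ≤ M * (Real.exp (c₀ * t) - 1) := by
    have hMc : c₀ * M / c₀ = M := by field_simp
    simpa [hMc] using hg
  have hexp : Real.exp (c₀ * t) ≤ 2 := by
    have h1 : c₀ * t ≤ 1 / 2 := by nlinarith [ht.1, ht.2, hc₀pos.le, hsmall]
    have h2 : Real.exp (c₀ * t) ≤ Real.exp ((1:ℝ) / 2) := Real.exp_le_exp.mpr h1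
    have h3 : Real.exp ((1:ℝ) / 2) * Real.exp ((1:ℝ) / 2) = Real.exp 1 := by
      rw [← Real.exp_add]; norm_num
    nlinarith [Real.exp_one_lt_d9, Real.exp_pos ((1:ℝ) / 2)]
  have hfin := hint t ht
  have hrhs : 2 * M ^ 3 * (η ^ (α - 1) / lam) * ε = 2 * M * c₀ := by
    rw [hc₀]; ring
  have hwt : |u t - v t| = |w t| := rfl
  rw [hwt, hrhs]
  have hA : c₀ * h t ≤ c₀ * (M * (Real.exp (c₀ * t) - 1)) :=
    mul_le_mul_of_nonneg_left hgt hc₀pos.le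
  have hB : c₀ * (M * (Real.exp (c₀ * t) - 1)) ≤ c₀ * (M * 1) := by
    refine mul_le_mul_of_nonneg_left (mul_le_mul_of_nonneg_left (by linarith) hM.le) hc₀pos.le
  have hCt : c₀ * M * t ≤ c₀ * M * 1 :=
    mul_le_mul_of_nonneg_left ht.2 (mul_pos hc₀pos hM).le
  nlinarith [hfin, hA, hB, hCt]
end
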